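/- arXiv:0805.3561 — 2 statements merged into one kernel-verified Lean document; each statement's English description precedes it below -/
import Mathlib

section
/- Let φ : ℚ[y1,y3,y4] → ℚ[y1,y3,y4] be the ℚ-algebra endomorphism determined by φ(y1) = k*y1, φ(y3) = a1*y1^3 + a2*y3, and φ(y4) = b1*y1^4 + b2*y1*y3 + b3*y4, where k, a1, a2, b1, b2, b3 ∈ ℚ. If φ(g8) ∈ I, φ(g9) ∈ I and φ(g12) ∈ I, then either (a1, a2, b1, b2, b3) = (0, k^3, 0, 0, k^4), or (a1, a2, b1, b2, b3) = (k^3, −k^3, k^4, −2*k^4, k^4). (This is the rigidity computation for X = E6/A6·S1: every degree-preserving endomorphism of H*(X;ℚ) sending the Kaehlerian class y1 to k*y1 is either the Adams operator ψ^k or ψ^k composed with the involution τ induced by the symmetry of the E6 Dynkin diagram.) -/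
/-!
Grade `ℚ[y₁, y₃, y₄]` by half the cohomological degree, so that `g₈, g₉, g₁₂` are weighted
homogeneous of weights `8, 9, 12` and `φ` preserves the grading. In weights `8` and `9` the ideal
`I` then consists only of `c₀ g₈` and `c₁ y₁ g₈ + c₂ g₉`, so `φ g₈ = c₀ g₈` and
`φ g₉ = c₁ y₁ g₈ + c₂ g₉`. Comparing coefficients gives polynomial equations in the parameters.
If `a₂ ≠ 0` they leave exactly the two solutions `ψᵏ` and `ψᵏ ∘ τ`. If `a₂ = 0` they force
`2 b₂² = 3 b₃²`, hence `b₂ = b₃ = 0` as `6` is not a rational square, and then `(k, a₁, b₁)` is a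
rational common zero of `g₈` and `g₉`, which must be trivial.
-/

open MvPolynomial

theorem eq_zero_of_sq_eq_mul_sq {K : Type*} [Field K] {n u v : K} (hn : ¬IsSquare n)
    (h : u ^ 2 = n * v ^ 2) : v = 0 := by
  by_contra hv
  exact hn ⟨u / v, by field_simp; linear_combination -h⟩

theorem Finsupp.weight_eq_one_iff {σ : Type*} [Fintype σ] [DecidableEq σ] {w : σ → ℕ} {i : σ}
    (hi : w i = 1) (hw : ∀ j ≠ i, 1 < w j) (d : σ →₀ ℕ) : weight w d = 1 ↔ d = single i 1 := by
  refine ⟨fun hd => ?_, fun hd => by simp [hd, weight_apply, hi]⟩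
  rw [weight_apply, sum_fintype _ _ (by simp)] at hd
  simp only [smul_eq_mul] at hd
  have hzero : ∀ j ≠ i, d j = 0 := fun j hj => by
    have := hd ▸ Finset.single_le_sum (fun k _ => Nat.zero_le (d k * w k)) (Finset.mem_univ j)
    have := hw j hj
    nlinarith
  rw [Finset.sum_eq_single i (fun j _ hj => by simp [hzero j hj]) (by simp), hi, mul_one] at hd
  ext j
  rcases eq_or_ne j i with rfl | hj
  · simp [hd]
  · simp [hzero j hj, single_eq_of_ne hj]

namespace MvPolynomial

variable {σ R : Type*} [CommSemiring R] {w : σ → ℕ}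

attribute [local instance] weightedGradedAlgebra

theorem weightedHomogeneousComponent_mul_of_isWeightedHomogeneous {g : MvPolynomial σ R} {m : ℕ}
    (hg : IsWeightedHomogeneous w g m) (f : MvPolynomial σ R) (n : ℕ) :
    weightedHomogeneousComponent w n (f * g) =
      if m ≤ n then weightedHomogeneousComponent w (n - m) f * g else 0 := by
  classical
  rw [← weightedDecomposition.decompose'_apply, ← weightedDecomposition.decompose'_apply]
  exact DirectSum.coe_decompose_mul_of_right_mem _ n hg

theorem weightedHomogeneousComponent_one [Fintype σ] [DecidableEq σ] {i : σ} (hi : w i = 1)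
    (hw : ∀ j ≠ i, 1 < w j) (f : MvPolynomial σ R) :
    weightedHomogeneousComponent w 1 f = C (coeff (Finsupp.single i 1) f) * X i := by
  rw [(weightedHomogeneousComponent_isWeightedHomogeneous 1 f).eq_monomial_of_unique_weight
      fun d => (Finsupp.weight_eq_one_iff hi hw d).mp, coeff_weightedHomogeneousComponent,
    if_pos ((Finsupp.weight_eq_one_iff hi hw _).mpr rfl), C_mul_X_eq_monomial]

theorem exists_eq_weightedHomogeneousComponent_mul_of_mem_span {p g₁ g₂ g₃ : MvPolynomial σ R}
    {n m₁ m₂ m₃ : ℕ} (hp : IsWeightedHomogeneous w p n) (h₁ : IsWeightedHomogeneous w g₁ m₁)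
    (h₂ : IsWeightedHomogeneous w g₂ m₂) (h₃ : IsWeightedHomogeneous w g₃ m₃)
    (hmem : p ∈ Ideal.span {g₁, g₂, g₃}) :
    ∃ f₁ f₂ f₃ : MvPolynomial σ R,
      p = (if m₁ ≤ n then weightedHomogeneousComponent w (n - m₁) f₁ * g₁ else 0) +
        (if m₂ ≤ n then weightedHomogeneousComponent w (n - m₂) f₂ * g₂ else 0) +
        (if m₃ ≤ n then weightedHomogeneousComponent w (n - m₃) f₃ * g₃ else 0) := by
  obtain ⟨f₁, q, hq, rfl⟩ := Ideal.mem_span_insert.mp hmem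
  obtain ⟨f₂, f₃, rfl⟩ := Ideal.mem_span_pair.mp hq
  refine ⟨f₁, f₂, f₃, ?_⟩
  rw [← hp.weightedHomogeneousComponent_same, map_add, map_add,
    weightedHomogeneousComponent_mul_of_isWeightedHomogeneous h₁,
    weightedHomogeneousComponent_mul_of_isWeightedHomogeneous h₂,
    weightedHomogeneousComponent_mul_of_isWeightedHomogeneous h₃, add_assoc]

theorem exists_eq_C_mul_of_mem_span {p g₁ g₂ g₃ : MvPolynomial σ R} {m₁ m₂ m₃ : ℕ}
    (hw : ∀ i, w i ≠ 0) (hp : IsWeightedHomogeneous w p m₁) (h₁ : IsWeightedHomogeneous w g₁ m₁)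
    (h₂ : IsWeightedHomogeneous w g₂ m₂) (h₃ : IsWeightedHomogeneous w g₃ m₃)
    (h₁₂ : m₁ < m₂) (h₁₃ : m₁ < m₃) (hmem : p ∈ Ideal.span {g₁, g₂, g₃}) :
    ∃ c, p = C c * g₁ := by
  obtain ⟨f₁, _, _, hrep⟩ :=
    exists_eq_weightedHomogeneousComponent_mul_of_mem_span hp h₁ h₂ h₃ hmem
  refine ⟨coeff 0 f₁, ?_⟩
  rwa [if_pos le_rfl, if_neg h₁₂.not_ge, if_neg h₁₃.not_ge, Nat.sub_self,
    weightedHomogeneousComponent_zero _ hw, add_zero, add_zero] at hrep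

theorem exists_eq_C_mul_X_mul_add_C_mul_of_mem_span [Fintype σ] [DecidableEq σ] {i : σ}
    (hi : w i = 1) (hw : ∀ j ≠ i, 1 < w j) {p g₁ g₂ g₃ : MvPolynomial σ R} {m m₃ : ℕ}
    (hp : IsWeightedHomogeneous w p (m + 1)) (h₁ : IsWeightedHomogeneous w g₁ m)
    (h₂ : IsWeightedHomogeneous w g₂ (m + 1)) (h₃ : IsWeightedHomogeneous w g₃ m₃)
    (h₂₃ : m + 1 < m₃) (hmem : p ∈ Ideal.span {g₁, g₂, g₃}) :
    ∃ c c', p = C c * X i * g₁ + C c' * g₂ := by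
  obtain ⟨f₁, f₂, _, hrep⟩ :=
    exists_eq_weightedHomogeneousComponent_mul_of_mem_span hp h₁ h₂ h₃ hmem
  have hw₀ : ∀ j, w j ≠ 0 := fun j => by
    rcases eq_or_ne j i with rfl | hj
    · omega
    · exact (hw j hj).ne_bot
  refine ⟨coeff (Finsupp.single i 1) f₁, coeff 0 f₂, ?_⟩
  rwa [if_pos m.le_succ, if_pos le_rfl, if_neg h₂₃.not_ge, Nat.add_sub_cancel_left, Nat.sub_self,
    weightedHomogeneousComponent_one hi hw, weightedHomogeneousComponent_zero _ hw₀,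
    add_zero] at hrep

theorem isWeightedHomogeneous_ofNat (n : ℕ) [n.AtLeastTwo] :
    IsWeightedHomogeneous w (OfNat.ofNat n : MvPolynomial σ R) 0 := by
  simpa [map_ofNat] using isWeightedHomogeneous_C w (OfNat.ofNat n : R)

end MvPolynomial

namespace E6A6

def weight : Fin 3 → ℕ := ![1, 3, 4]

section Forms

variable {R : Type*} [CommRing R]

def g₈ (y1 y3 y4 : R) : R :=
  6 * y4 ^ 2 - 12 * y1 * y3 * y4 + 9 * y1 ^ 2 * y3 ^ 2 + 3 * y1 ^ 4 * y4 - 6 * y1 ^ 5 * y3 + y1 ^ 8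

def g₉ (y1 y3 y4 : R) : R :=
  -2 * y3 ^ 3 + 6 * y3 * y1 ^ 2 * y4 - 3 * y1 ^ 3 * y3 ^ 2 + 4 * y3 * y1 ^ 6
    - 3 * y1 ^ 5 * y4 - y1 ^ 9

def g₁₂ (y1 y3 y4 : R) : R :=
  4 * y4 ^ 3 - y3 ^ 4 + 6 * y3 ^ 2 * y1 ^ 2 * y4 - 4 * y3 ^ 3 * y1 ^ 3
    - 2 * y3 ^ 2 * y1 ^ 6 - 9 * y1 ^ 4 * y4 ^ 2 + 12 * y1 ^ 5 * y4 * y3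
    - 6 * y1 ^ 8 * y4 + 4 * y1 ^ 9 * y3 - y1 ^ 12

variable {S F : Type*} [CommRing S] [FunLike F R S] [RingHomClass F R S]

theorem map_g₈ (f : F) (y1 y3 y4 : R) : f (g₈ y1 y3 y4) = g₈ (f y1) (f y3) (f y4) := by
  simp [g₈, map_ofNat]

theorem map_g₉ (f : F) (y1 y3 y4 : R) : f (g₉ y1 y3 y4) = g₉ (f y1) (f y3) (f y4) := by
  simp [g₉, map_ofNat]

variable {σ : Type*} {w : σ → ℕ} {p q r : MvPolynomial σ R}

theorem isWeightedHomogeneous_g₈ (hp : IsWeightedHomogeneous w p 1)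
    (hq : IsWeightedHomogeneous w q 3) (hr : IsWeightedHomogeneous w r 4) :
    IsWeightedHomogeneous w (g₈ p q r) 8 := by
  refine (((((?_ : IsWeightedHomogeneous w _ 8).sub ?_).add ?_).add ?_).sub ?_).add ?_
  · exact (isWeightedHomogeneous_ofNat 6).mul (hr.pow 2)
  · exact (((isWeightedHomogeneous_ofNat 12).mul hp).mul hq).mul hr
  · exact ((isWeightedHomogeneous_ofNat 9).mul (hp.pow 2)).mul (hq.pow 2)
  · exact ((isWeightedHomogeneous_ofNat 3).mul (hp.pow 4)).mul hr
  · exact ((isWeightedHomogeneous_ofNat 6).mul (hp.pow 5)).mul hq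
  · exact hp.pow 8

theorem isWeightedHomogeneous_g₉ (hp : IsWeightedHomogeneous w p 1)
    (hq : IsWeightedHomogeneous w q 3) (hr : IsWeightedHomogeneous w r 4) :
    IsWeightedHomogeneous w (g₉ p q r) 9 := by
  refine (((((?_ : IsWeightedHomogeneous w _ 9).add ?_).sub ?_).add ?_).sub ?_).sub ?_
  · exact (isWeightedHomogeneous_ofNat 2).neg.mul (hq.pow 3)
  · exact (((isWeightedHomogeneous_ofNat 6).mul hq).mul (hp.pow 2)).mul hr
  · exact ((isWeightedHomogeneous_ofNat 3).mul (hp.pow 3)).mul (hq.pow 2)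
  · exact ((isWeightedHomogeneous_ofNat 4).mul hq).mul (hp.pow 6)
  · exact ((isWeightedHomogeneous_ofNat 3).mul (hp.pow 5)).mul hr
  · exact hp.pow 9

theorem isWeightedHomogeneous_g₁₂ (hp : IsWeightedHomogeneous w p 1)
    (hq : IsWeightedHomogeneous w q 3) (hr : IsWeightedHomogeneous w r 4) :
    IsWeightedHomogeneous w (g₁₂ p q r) 12 := by
  refine (((((((((?_ : IsWeightedHomogeneous w _ 12).sub ?_).add ?_).sub ?_).sub ?_).sub ?_).add
    ?_).sub ?_).add ?_).sub ?_
  · exact (isWeightedHomogeneous_ofNat 4).mul (hr.pow 3)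
  · exact hq.pow 4
  · exact (((isWeightedHomogeneous_ofNat 6).mul (hq.pow 2)).mul (hp.pow 2)).mul hr
  · exact ((isWeightedHomogeneous_ofNat 4).mul (hq.pow 3)).mul (hp.pow 3)
  · exact ((isWeightedHomogeneous_ofNat 2).mul (hq.pow 2)).mul (hp.pow 6)
  · exact ((isWeightedHomogeneous_ofNat 9).mul (hp.pow 4)).mul (hr.pow 2)
  · exact (((isWeightedHomogeneous_ofNat 12).mul (hp.pow 5)).mul hr).mul hq
  · exact ((isWeightedHomogeneous_ofNat 6).mul (hp.pow 8)).mul hr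
  · exact ((isWeightedHomogeneous_ofNat 4).mul (hp.pow 9)).mul hq
  · exact hp.pow 12

theorem isWeightedHomogeneous_X₀ : IsWeightedHomogeneous weight (X 0 : MvPolynomial (Fin 3) R) 1 :=
  isWeightedHomogeneous_X R weight 0

theorem isWeightedHomogeneous_X₁ : IsWeightedHomogeneous weight (X 1 : MvPolynomial (Fin 3) R) 3 :=
  isWeightedHomogeneous_X R weight 1

theorem isWeightedHomogeneous_X₂ : IsWeightedHomogeneous weight (X 2 : MvPolynomial (Fin 3) R) 4 :=
  isWeightedHomogeneous_X R weight 2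

theorem isWeightedHomogeneous_g₈_X :
    IsWeightedHomogeneous weight (g₈ (X 0) (X 1) (X 2) : MvPolynomial (Fin 3) R) 8 :=
  isWeightedHomogeneous_g₈ isWeightedHomogeneous_X₀ isWeightedHomogeneous_X₁ isWeightedHomogeneous_X₂

theorem isWeightedHomogeneous_g₉_X :
    IsWeightedHomogeneous weight (g₉ (X 0) (X 1) (X 2) : MvPolynomial (Fin 3) R) 9 :=
  isWeightedHomogeneous_g₉ isWeightedHomogeneous_X₀ isWeightedHomogeneous_X₁ isWeightedHomogeneous_X₂

theorem isWeightedHomogeneous_g₁₂_X :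
    IsWeightedHomogeneous weight (g₁₂ (X 0) (X 1) (X 2) : MvPolynomial (Fin 3) R) 12 :=
  isWeightedHomogeneous_g₁₂ isWeightedHomogeneous_X₀ isWeightedHomogeneous_X₁
    isWeightedHomogeneous_X₂

noncomputable def relationIdeal : Ideal (MvPolynomial (Fin 3) R) :=
  Ideal.span {g₈ (X 0) (X 1) (X 2), g₉ (X 0) (X 1) (X 2), g₁₂ (X 0) (X 1) (X 2)}

variable {p q r : MvPolynomial (Fin 3) R}

theorem exists_g₈_eq_C_mul (hp : IsWeightedHomogeneous weight p 1)
    (hq : IsWeightedHomogeneous weight q 3) (hr : IsWeightedHomogeneous weight r 4)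
    (h : g₈ p q r ∈ relationIdeal) : ∃ c, g₈ p q r = C c * g₈ (X 0) (X 1) (X 2) :=
  exists_eq_C_mul_of_mem_span (by decide) (isWeightedHomogeneous_g₈ hp hq hr)
    isWeightedHomogeneous_g₈_X isWeightedHomogeneous_g₉_X isWeightedHomogeneous_g₁₂_X
    (by norm_num) (by norm_num) h

theorem exists_g₉_eq_C_mul_X_mul_add_C_mul (hp : IsWeightedHomogeneous weight p 1)
    (hq : IsWeightedHomogeneous weight q 3) (hr : IsWeightedHomogeneous weight r 4)
    (h : g₉ p q r ∈ relationIdeal) :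
    ∃ c₁ c₂, g₉ p q r = C c₁ * X 0 * g₈ (X 0) (X 1) (X 2) + C c₂ * g₉ (X 0) (X 1) (X 2) :=
  exists_eq_C_mul_X_mul_add_C_mul_of_mem_span (w := weight) (i := 0) rfl (by decide)
    (isWeightedHomogeneous_g₉ hp hq hr) isWeightedHomogeneous_g₈_X isWeightedHomogeneous_g₉_X
    isWeightedHomogeneous_g₁₂_X (by norm_num) h

end Forms

/- If `2y = x³`, then `g₈ = 0` reads `(12z - 3x⁴)² = 3x⁸`; otherwise eliminating `z` between
`g₈` and `g₉` leaves a positive multiple of a sum of squares. -/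
theorem eq_zero_of_g₈_eq_zero_of_g₉_eq_zero {x y z : ℚ} (h8 : g₈ x y z = 0) (h9 : g₉ x y z = 0) :
    x = 0 ∧ y = 0 ∧ z = 0 := by
  unfold g₈ at h8
  unfold g₉ at h9
  obtain rfl : x = 0 := by
    by_contra hx
    rcases eq_or_ne (2 * y - x ^ 3) 0 with h | h
    · refine pow_ne_zero 4 hx (eq_zero_of_sq_eq_mul_sq (n := 3) (u := 12 * z - 3 * x ^ 4)
        (by norm_num) ?_)
      linear_combination 24 * h8 + (144 * x * z - 108 * x ^ 2 * y + 18 * x ^ 5) * h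
    · set t := 2 * y - x ^ 3
      have key : 6 * t ^ 2 * ((y ^ 2 - y * x ^ 3) ^ 2 + x ^ 6 * t ^ 2) = 0 := by
        linear_combination 9 * x ^ 4 * t ^ 2 * h8 - (12 * y ^ 3 + 36 * x ^ 2 * y * z
          - 54 * x ^ 3 * y ^ 2 - 18 * x ^ 5 * z + 30 * x ^ 6 * y - 3 * x ^ 9) * h9
      have : 0 < 6 * t ^ 2 * ((y ^ 2 - y * x ^ 3) ^ 2 + x ^ 6 * t ^ 2) := by positivity
      exact this.ne' key
  refine ⟨rfl, pow_eq_zero_iff (n := 3) (by norm_num) |>.mp (by linear_combination -h9 / 2),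
    pow_eq_zero_iff (n := 2) (by norm_num) |>.mp (by linear_combination h8 / 6)⟩

variable {k a1 a2 b1 b2 b3 : ℚ}

/- Coefficients are read off by evaluation: besides `(0, 0, 1)` and `(0, 1, 0)`, the points
`(1, ±1, 0)`, `(1, 0, ±1)` and `(1, ±1, ±1)` separate the monomials by their parities in `y₃, y₄`. -/
theorem coeff_eqs_of_forall_g₈_eq {c : ℚ}
    (h : ∀ x y z : ℚ, g₈ (k * x) (a1 * x ^ 3 + a2 * y) (b1 * x ^ 4 + b2 * x * y + b3 * z) =
      c * g₈ x y z) :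
    6 * b2 ^ 2 - 12 * k * a2 * b2 + 9 * k ^ 2 * a2 ^ 2 = 9 * b3 ^ 2 ∧
      12 * b1 * b3 - 12 * k * a1 * b3 + 3 * k ^ 4 * b3 = 3 * b3 ^ 2 ∧
      g₈ k a1 b1 = b3 ^ 2 := by
  have e001 := h 0 0 1
  have e100 := h 1 0 0
  have e101 := h 1 0 1
  have e10m := h 1 0 (-1)
  have e110 := h 1 1 0
  have e1m0 := h 1 (-1) 0
  simp only [g₈] at *
  have hc : c = b3 ^ 2 := by linear_combination -e001 / 6
  exact ⟨by linear_combination (e110 + e1m0) / 2 - e100 + 9 * hc,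
    by linear_combination (e101 - e10m) / 2 + 3 * hc, by linear_combination e100 + hc⟩

theorem coeff_eqs_of_forall_g₉_eq {c₁ c₂ : ℚ}
    (h : ∀ x y z : ℚ, g₉ (k * x) (a1 * x ^ 3 + a2 * y) (b1 * x ^ 4 + b2 * x * y + b3 * z) =
      c₁ * x * g₈ x y z + c₂ * g₉ x y z) :
    k ^ 2 * a2 * b3 = a2 ^ 3 ∧
      -2 * a1 * a2 ^ 2 + 2 * k ^ 2 * a2 * b2 - k ^ 3 * a2 ^ 2 + a2 ^ 3 = 0 ∧
      2 * k ^ 2 * a1 * b3 - k ^ 5 * b3 + a2 ^ 3 = 0 ∧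
      g₉ k a1 b1 = -a2 ^ 3 := by
  have e010 := h 0 1 0
  have e100 := h 1 0 0
  have e101 := h 1 0 1
  have e10m := h 1 0 (-1)
  have e110 := h 1 1 0
  have e1m0 := h 1 (-1) 0
  have e111 := h 1 1 1
  have e11m := h 1 1 (-1)
  have e1m1 := h 1 (-1) 1
  have e1mm := h 1 (-1) (-1)
  simp only [g₈, g₉] at *
  have hc₁ : c₁ = 0 := by linear_combination -((e101 + e10m) / 2 - e100) / 6
  have hc₂ : c₂ = a2 ^ 3 := by linear_combination e010 / 2
  exact ⟨by linear_combination (e111 - e11m - e1m1 + e1mm) / 24 - 2 * hc₁ + hc₂,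
    by linear_combination ((e110 + e1m0) / 2 - e100) / 3 + 3 * hc₁ - hc₂,
    by linear_combination (e101 - e10m) / 6 + hc₁ - hc₂,
    by linear_combination e100 + hc₁ - hc₂⟩

theorem eq_or_eq_of_a2_ne_zero (ha2 : a2 ≠ 0)
    (q3 : 6 * b2 ^ 2 - 12 * k * a2 * b2 + 9 * k ^ 2 * a2 ^ 2 = 9 * b3 ^ 2)
    (q4 : 12 * b1 * b3 - 12 * k * a1 * b3 + 3 * k ^ 4 * b3 = 3 * b3 ^ 2)
    (n3 : k ^ 2 * a2 * b3 = a2 ^ 3)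
    (n4 : -2 * a1 * a2 ^ 2 + 2 * k ^ 2 * a2 * b2 - k ^ 3 * a2 ^ 2 + a2 ^ 3 = 0)
    (n5 : 2 * k ^ 2 * a1 * b3 - k ^ 5 * b3 + a2 ^ 3 = 0) :
    (a1 = 0 ∧ a2 = k ^ 3 ∧ b1 = 0 ∧ b2 = 0 ∧ b3 = k ^ 4) ∨
    (a1 = k ^ 3 ∧ a2 = -k ^ 3 ∧ b1 = k ^ 4 ∧ b2 = -2 * k ^ 4 ∧ b3 = k ^ 4) := by
  have hb3 : k ^ 2 * b3 = a2 ^ 2 :=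
    (mul_right_injective₀ ha2).eq_iff.mp (by linear_combination n3)
  have hk : k ≠ 0 := by
    rintro rfl
    exact ha2 (pow_eq_zero_iff two_ne_zero |>.mp (by linear_combination -hb3))
  have hb3' : b3 ≠ 0 := by
    rintro rfl
    exact ha2 (pow_eq_zero_iff two_ne_zero |>.mp (by linear_combination -hb3))
  have ha2' : a2 = k ^ 3 - 2 * a1 := (mul_right_injective₀ (pow_ne_zero 2 ha2)).eq_iff.mp
    (by linear_combination n5 - (2 * a1 - k ^ 3) * hb3)
  have hb2 : k ^ 2 * b2 = 2 * a1 * a2 :=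
    (mul_right_injective₀ ha2).eq_iff.mp (by linear_combination n4 / 2 - a2 ^ 2 / 2 * ha2')
  have ha1 : a1 * (a1 - k ^ 3) = 0 := (mul_right_injective₀ (pow_ne_zero 2 ha2)).eq_iff.mp (by
    linear_combination (-1 / 12) * (k ^ 4 * q3 - (6 * (k ^ 2 * b2 + 2 * a1 * a2)
      - 12 * k ^ 3 * a2) * hb2 + 9 * (k ^ 2 * b3 + a2 ^ 2) * hb3
      + 9 * a2 ^ 2 * (a2 + k ^ 3 - 2 * a1) * ha2'))
  have hb3v : b3 = k ^ 4 := (mul_right_injective₀ (pow_ne_zero 2 hk)).eq_iff.mp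
    (by linear_combination hb3 + 4 * ha1 + (a2 + k ^ 3 - 2 * a1) * ha2')
  have hb1 : b1 = k * a1 :=
    (mul_right_injective₀ hb3').eq_iff.mp (by linear_combination q4 / 12 + (b3 / 4) * hb3v)
  rcases mul_eq_zero.mp ha1 with ha1 | ha1
  · refine .inl ⟨ha1, by linear_combination ha2' - 2 * ha1, by linear_combination hb1 + k * ha1,
      (mul_right_injective₀ (pow_ne_zero 2 hk)).eq_iff.mp (by linear_combination hb2 + 2 * a2 * ha1),
      hb3v⟩
  · refine .inr ⟨by linear_combination ha1, by linear_combination ha2' - 2 * ha1,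
      by linear_combination hb1 + k * ha1,
      (mul_right_injective₀ (pow_ne_zero 2 hk)).eq_iff.mp
        (by linear_combination hb2 + 2 * a1 * ha2' - (4 * a1 + 2 * k ^ 3) * ha1), hb3v⟩

theorem eq_zero_of_a2_eq_zero (q3 : 6 * b2 ^ 2 = 9 * b3 ^ 2) (q6 : g₈ k a1 b1 = b3 ^ 2)
    (n7 : g₉ k a1 b1 = 0) : k = 0 ∧ a1 = 0 ∧ b1 = 0 ∧ b2 = 0 ∧ b3 = 0 := by
  obtain rfl : b3 = 0 := eq_zero_of_sq_eq_mul_sq (n := 6) (u := 2 * b2) (by norm_num)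
    (by linear_combination 2 / 3 * q3)
  obtain ⟨rfl, rfl, rfl⟩ := eq_zero_of_g₈_eq_zero_of_g₉_eq_zero (by simpa using q6) n7
  exact ⟨rfl, rfl, rfl, pow_eq_zero_iff two_ne_zero |>.mp (by linear_combination q3 / 6), rfl⟩

end E6A6

theorem E6_A6_rigidity_general (k a1 a2 b1 b2 b3 : ℚ)
    (y1 y3 y4 g8 g9 g12 : MvPolynomial (Fin 3) ℚ)
    (hy1 : y1 = X 0) (hy3 : y3 = X 1) (hy4 : y4 = X 2)
    (hg8 : g8 = 6 * y4 ^ 2 - 12 * y1 * y3 * y4 + 9 * y1 ^ 2 * y3 ^ 2 + 3 * y1 ^ 4 * y4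
      - 6 * y1 ^ 5 * y3 + y1 ^ 8)
    (hg9 : g9 = -2 * y3 ^ 3 + 6 * y3 * y1 ^ 2 * y4 - 3 * y1 ^ 3 * y3 ^ 2 + 4 * y3 * y1 ^ 6
      - 3 * y1 ^ 5 * y4 - y1 ^ 9)
    (hg12 : g12 = 4 * y4 ^ 3 - y3 ^ 4 + 6 * y3 ^ 2 * y1 ^ 2 * y4 - 4 * y3 ^ 3 * y1 ^ 3
      - 2 * y3 ^ 2 * y1 ^ 6 - 9 * y1 ^ 4 * y4 ^ 2 + 12 * y1 ^ 5 * y4 * y3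
      - 6 * y1 ^ 8 * y4 + 4 * y1 ^ 9 * y3 - y1 ^ 12)
    (I : Ideal (MvPolynomial (Fin 3) ℚ)) (hI : I = Ideal.span {g8, g9, g12})
    (φ : MvPolynomial (Fin 3) ℚ →ₐ[ℚ] MvPolynomial (Fin 3) ℚ)
    (hφ1 : φ y1 = C k * y1)
    (hφ3 : φ y3 = C a1 * y1 ^ 3 + C a2 * y3)
    (hφ4 : φ y4 = C b1 * y1 ^ 4 + C b2 * y1 * y3 + C b3 * y4)
    (h8 : φ g8 ∈ I) (h9 : φ g9 ∈ I) :
    (a1 = 0 ∧ a2 = k ^ 3 ∧ b1 = 0 ∧ b2 = 0 ∧ b3 = k ^ 4) ∨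
    (a1 = k ^ 3 ∧ a2 = -k ^ 3 ∧ b1 = k ^ 4 ∧ b2 = -2 * k ^ 4 ∧ b3 = k ^ 4) := by
  have e8 : g8 = E6A6.g₈ y1 y3 y4 := hg8
  have e9 : g9 = E6A6.g₉ y1 y3 y4 := hg9
  have e12 : g12 = E6A6.g₁₂ y1 y3 y4 := hg12
  subst hI e8 e9 e12 hy1 hy3 hy4
  rw [E6A6.map_g₈, hφ1, hφ3, hφ4] at h8
  rw [E6A6.map_g₉, hφ1, hφ3, hφ4] at h9
  have hY1 := E6A6.isWeightedHomogeneous_X₀.C_mul k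
  have hY3 := ((E6A6.isWeightedHomogeneous_X₀.pow 3).C_mul a1).add
    (E6A6.isWeightedHomogeneous_X₁.C_mul a2)
  have hY4 := (((E6A6.isWeightedHomogeneous_X₀.pow 4).C_mul b1).add
    ((E6A6.isWeightedHomogeneous_X₀.C_mul b2).mul E6A6.isWeightedHomogeneous_X₁)).add
    (E6A6.isWeightedHomogeneous_X₂.C_mul b3)
  obtain ⟨c, H8⟩ := E6A6.exists_g₈_eq_C_mul hY1 hY3 hY4 h8
  obtain ⟨c₁, c₂, H9⟩ := E6A6.exists_g₉_eq_C_mul_X_mul_add_C_mul hY1 hY3 hY4 h9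
  obtain ⟨q3, q4, q6⟩ := E6A6.coeff_eqs_of_forall_g₈_eq (c := c) fun x y z => by
    simpa [E6A6.map_g₈] using congrArg (eval ![x, y, z]) H8
  obtain ⟨n3, n4, n5, n7⟩ := E6A6.coeff_eqs_of_forall_g₉_eq (c₁ := c₁) (c₂ := c₂) fun x y z => by
    simpa [E6A6.map_g₈, E6A6.map_g₉] using congrArg (eval ![x, y, z]) H9
  rcases eq_or_ne a2 0 with rfl | ha2
  · obtain ⟨rfl, rfl, rfl, rfl, rfl⟩ :=
      E6A6.eq_zero_of_a2_eq_zero (b2 := b2) (by linear_combination q3) q6 (by simpa using n7)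
    left
    norm_num
  · exact E6A6.eq_or_eq_of_a2_ne_zero ha2 q3 q4 n3 n4 n5

/-- Rigidity computation for `X = E₆/A₆·S¹`: a degree-preserving endomorphism
with `φ(y₁) = k·y₁` is either the Adams operator `ψᵏ` or `ψᵏ ∘ τ`. -/
theorem E6_A6_rigidity (k a1 a2 b1 b2 b3 : ℚ)
    (y1 y3 y4 g8 g9 g12 : MvPolynomial (Fin 3) ℚ)
    (hy1 : y1 = X 0) (hy3 : y3 = X 1) (hy4 : y4 = X 2)
    (hg8 : g8 = 6 * y4 ^ 2 - 12 * y1 * y3 * y4 + 9 * y1 ^ 2 * y3 ^ 2 + 3 * y1 ^ 4 * y4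
      - 6 * y1 ^ 5 * y3 + y1 ^ 8)
    (hg9 : g9 = -2 * y3 ^ 3 + 6 * y3 * y1 ^ 2 * y4 - 3 * y1 ^ 3 * y3 ^ 2 + 4 * y3 * y1 ^ 6
      - 3 * y1 ^ 5 * y4 - y1 ^ 9)
    (hg12 : g12 = 4 * y4 ^ 3 - y3 ^ 4 + 6 * y3 ^ 2 * y1 ^ 2 * y4 - 4 * y3 ^ 3 * y1 ^ 3
      - 2 * y3 ^ 2 * y1 ^ 6 - 9 * y1 ^ 4 * y4 ^ 2 + 12 * y1 ^ 5 * y4 * y3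
      - 6 * y1 ^ 8 * y4 + 4 * y1 ^ 9 * y3 - y1 ^ 12)
    (I : Ideal (MvPolynomial (Fin 3) ℚ)) (hI : I = Ideal.span {g8, g9, g12})
    (φ : MvPolynomial (Fin 3) ℚ →ₐ[ℚ] MvPolynomial (Fin 3) ℚ)
    (hφ1 : φ y1 = C k * y1)
    (hφ3 : φ y3 = C a1 * y1 ^ 3 + C a2 * y3)
    (hφ4 : φ y4 = C b1 * y1 ^ 4 + C b2 * y1 * y3 + C b3 * y4)
    (h8 : φ g8 ∈ I) (h9 : φ g9 ∈ I) (h12 : φ g12 ∈ I) :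
    (a1 = 0 ∧ a2 = k ^ 3 ∧ b1 = 0 ∧ b2 = 0 ∧ b3 = k ^ 4) ∨
    (a1 = k ^ 3 ∧ a2 = -k ^ 3 ∧ b1 = k ^ 4 ∧ b2 = -2 * k ^ 4 ∧ b3 = k ^ 4) :=
  E6_A6_rigidity_general k a1 a2 b1 b2 b3 y1 y3 y4 g8 g9 g12 hy1 hy3 hy4 hg8 hg9 hg12 I hI φ hφ1 hφ3
    hφ4 h8 h9
end

section
/- Let φ : ℚ[y1,y4] → ℚ[y1,y4] be the ℚ-algebra endomorphism determined by φ(y1) = k*y1 and φ(y4) = a*y1^4 + b*y4, where k, a, b ∈ ℚ. If φ(g9) ∈ I and φ(g12) ∈ I (i.e. φ maps the ideal I into itself), then a = 0 and b = k^4. (This is the rigidity computation for X = E6/D5·S1: every degree-preserving endomorphism of H*(X;ℚ) sending the Kaehlerian class y1 to k*y1 is the Adams operator ψ^k.) -/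
/-!
Grade `ℚ[y1, y4]` by `deg y1 = 2`, `deg y4 = 8`. Then `g9`, `g12` are homogeneous of degrees 18
and 24, and `φ` preserves degrees. The degree-18 part of `I` is `ℚ g9` and its degree-24 part is
spanned by `y1³ g9` and `g12`, so `φ g9 = c g9` and `φ g12 = e y1³ g9 + f g12`. Setting `y1 = 1`
and comparing coefficients of `y4` leaves polynomial equations in `k, a, b`. Apart from
`a = 0, b = k⁴`, their solutions would have `k ≠ 0` and either `b = 0`, which needs `√3 ∈ ℚ`,
or `b = -k⁴`, which forces `k = 0`.
-/

open MvPolynomial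

theorem sq_ne_three_mul_sq {x t : ℚ} (ht : t ≠ 0) : x ^ 2 ≠ 3 * t ^ 2 := by
  intro h
  have : IsSquare (3 : ℚ) := ⟨x / t, by field_simp; linear_combination -h⟩
  norm_num at this

namespace MvPolynomial
variable {σ τ R S M : Type*} [CommSemiring R] [CommSemiring S] [Algebra R S] [AddCommMonoid M]

theorem IsWeightedHomogeneous.aeval {w : σ → M} {w' : τ → M} {p : MvPolynomial σ R} {n : M}
    (hp : IsWeightedHomogeneous w p n) {g : σ → MvPolynomial τ S}
    (hg : ∀ i, IsWeightedHomogeneous w' (g i) (w i)) :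
    IsWeightedHomogeneous w' (aeval g p) n := by
  classical
  rw [p.as_sum, map_sum]
  refine IsWeightedHomogeneous.sum _ _ _ fun d hd => ?_
  rw [aeval_monomial, ← hp (mem_support_iff.mp hd), Finsupp.weight_apply, algebraMap_apply]
  exact (IsWeightedHomogeneous.prod _ _ _ fun i _ => (hg i).pow (d i)).C_mul _

attribute [local instance] weightedGradedAlgebra in
theorem weightedHomogeneousComponent_mul_of_isWeightedHomogeneous_right {w : σ → ℕ}
    {g : MvPolynomial σ R} {m : ℕ} (hg : IsWeightedHomogeneous w g m) (p : MvPolynomial σ R)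
    (n : ℕ) :
    weightedHomogeneousComponent w n (p * g) =
      if m ≤ n then weightedHomogeneousComponent w (n - m) p * g else 0 := by
  simp only [← weightedDecomposition.decompose'_apply]
  exact DirectSum.coe_decompose_mul_of_right_mem (weightedHomogeneousSubmodule R w) n hg

theorem IsWeightedHomogeneous.exists_eq_of_mem_span_pair {w : σ → ℕ}
    {F g h : MvPolynomial σ R} {n m m' : ℕ} (hF : IsWeightedHomogeneous w F n)
    (hg : IsWeightedHomogeneous w g m) (hh : IsWeightedHomogeneous w h m')
    (hmem : F ∈ Ideal.span {g, h}) :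
    ∃ p q : MvPolynomial σ R,
      F = (if m ≤ n then weightedHomogeneousComponent w (n - m) p * g else 0) +
        (if m' ≤ n then weightedHomogeneousComponent w (n - m') q * h else 0) := by
  obtain ⟨p, q, rfl⟩ := Ideal.mem_span_pair.mp hmem
  refine ⟨p, q, ?_⟩
  rw [← hF.weightedHomogeneousComponent_same, map_add,
    weightedHomogeneousComponent_mul_of_isWeightedHomogeneous_right hg,
    weightedHomogeneousComponent_mul_of_isWeightedHomogeneous_right hh]

end MvPolynomial

namespace E6D5

abbrev deg : Fin 2 → ℕ := ![2, 8]

noncomputable def g9 : MvPolynomial (Fin 2) ℚ :=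
  2 * X 0 ^ 9 + 3 * X 0 * X 1 ^ 2 - 6 * X 0 ^ 5 * X 1

noncomputable def g12 : MvPolynomial (Fin 2) ℚ :=
  X 1 ^ 3 - 6 * X 0 ^ 4 * X 1 ^ 2 + X 0 ^ 12

theorem isWeightedHomogeneous_X_pow_mul_X_pow (i j : ℕ) :
    IsWeightedHomogeneous deg (X 0 ^ i * X 1 ^ j : MvPolynomial (Fin 2) ℚ) (2 * i + 8 * j) := by
  simpa [mul_comm] using
    ((isWeightedHomogeneous_X ℚ deg 0).pow i).mul ((isWeightedHomogeneous_X ℚ deg 1).pow j)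

theorem isWeightedHomogeneous_g9 : IsWeightedHomogeneous deg g9 18 := by
  have h := isWeightedHomogeneous_X_pow_mul_X_pow
  have hg9 : g9 = C 2 * (X 0 ^ 9 * X 1 ^ 0) + C 3 * (X 0 ^ 1 * X 1 ^ 2) -
      C 6 * (X 0 ^ 5 * X 1 ^ 1) := by
    simp only [g9, map_ofNat]
    ring
  rw [hg9]
  exact (((h 9 0).C_mul 2).add ((h 1 2).C_mul 3)).sub ((h 5 1).C_mul 6)

theorem isWeightedHomogeneous_g12 : IsWeightedHomogeneous deg g12 24 := by
  have h := isWeightedHomogeneous_X_pow_mul_X_pow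
  have hg12 : g12 = C 1 * (X 0 ^ 0 * X 1 ^ 3) - C 6 * (X 0 ^ 4 * X 1 ^ 2) +
      C 1 * (X 0 ^ 12 * X 1 ^ 0) := by
    simp only [g12, map_ofNat, C_1]
    ring
  rw [hg12]
  exact (((h 0 3).C_mul 1).sub ((h 4 2).C_mul 6)).add ((h 12 0).C_mul 1)

theorem weight_deg (d : Fin 2 →₀ ℕ) : Finsupp.weight deg d = 2 * d 0 + 8 * d 1 := by
  simp [Finsupp.weight_apply, Finsupp.sum_fintype, mul_comm]

theorem exists_eq_C_mul_g9 {F : MvPolynomial (Fin 2) ℚ} (hF : IsWeightedHomogeneous deg F 18)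
    (hmem : F ∈ Ideal.span {g9, g12}) : ∃ c, F = C c * g9 := by
  obtain ⟨p, q, hpq⟩ := hF.exists_eq_of_mem_span_pair isWeightedHomogeneous_g9
    isWeightedHomogeneous_g12 hmem
  refine ⟨coeff 0 p, ?_⟩
  simpa using hpq

theorem exists_eq_C_mul_X_pow_mul_g9_add_C_mul_g12 {F : MvPolynomial (Fin 2) ℚ}
    (hF : IsWeightedHomogeneous deg F 24) (hmem : F ∈ Ideal.span {g9, g12}) :
    ∃ e f, F = C e * X 0 ^ 3 * g9 + C f * g12 := by
  obtain ⟨p, q, hpq⟩ := hF.exists_eq_of_mem_span_pair isWeightedHomogeneous_g9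
    isWeightedHomogeneous_g12 hmem
  have hp : weightedHomogeneousComponent deg 6 p = monomial (Finsupp.single 0 3) _ :=
    (weightedHomogeneousComponent_isWeightedHomogeneous 6 p).eq_monomial_of_unique_weight
      fun d hd => by
        rw [weight_deg] at hd
        ext i; fin_cases i <;> simp <;> omega
  rw [← C_mul_X_pow_eq_monomial] at hp
  simp only [Nat.reduceLeDiff, le_refl, ↓reduceIte, Nat.reduceSub] at hpq
  rw [hp, weightedHomogeneousComponent_zero _ (by decide)] at hpq
  exact ⟨_, _, hpq⟩

theorem isWeightedHomogeneous_map {k a b : ℚ}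
    {φ : MvPolynomial (Fin 2) ℚ →ₐ[ℚ] MvPolynomial (Fin 2) ℚ}
    (hφ1 : φ (X 0) = C k * X 0) (hφ4 : φ (X 1) = C a * X 0 ^ 4 + C b * X 1)
    ⦃p : MvPolynomial (Fin 2) ℚ⦄ ⦃n : ℕ⦄ (hp : IsWeightedHomogeneous deg p n) :
    IsWeightedHomogeneous deg (φ p) n := by
  rw [aeval_unique φ]
  refine hp.aeval fun i => ?_
  have h := isWeightedHomogeneous_X_pow_mul_X_pow
  fin_cases i
  · simpa [hφ1] using (h 1 0).C_mul k
  · simpa [hφ4] using ((h 4 0).C_mul a).add ((h 0 1).C_mul b)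

theorem rigidity_of_equations {k a b : ℚ}
    (h1 : k * (2 * k ^ 8 - 6 * k ^ 4 * a + 3 * a ^ 2 - 2 * b ^ 2) = 0)
    (h2 : k * b * (a + b - k ^ 4) = 0)
    (h3 : b * ((a + b) ^ 2 + 3 * b ^ 2 - 4 * k ^ 4 * (a + b)) = 0)
    (h4 : a ^ 3 - 6 * k ^ 4 * a ^ 2 + k ^ 12 = 4 * k ^ 4 * a * b - a ^ 2 * b + b ^ 3) :
    a = 0 ∧ b = k ^ 4 := by
  rcases eq_or_ne k 0 with rfl | hk
  · have h3 : b * ((a + b) ^ 2 + 3 * b ^ 2) = 0 := by simpa using h3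
    obtain rfl : b = 0 := by
      rcases mul_eq_zero.mp h3 with hb | hb
      · exact hb
      · exact pow_eq_zero_iff two_ne_zero |>.mp (by nlinarith [sq_nonneg (a + b), sq_nonneg b])
    exact ⟨pow_eq_zero_iff three_ne_zero |>.mp (by simpa using h4), by simp⟩
  have h1 : 2 * k ^ 8 - 6 * k ^ 4 * a + 3 * a ^ 2 - 2 * b ^ 2 = 0 := by simpa [hk] using h1
  rcases mul_eq_zero.mp h2 with hkb | hab
  · obtain rfl : b = 0 := by simpa [hk] using hkb
    exact absurd (by linear_combination 3 * h1)
      (sq_ne_three_mul_sq (x := 3 * a - 3 * k ^ 4) (pow_ne_zero 4 hk))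
  obtain rfl : a = k ^ 4 - b := by linear_combination hab
  have hb : (b - k ^ 4) * (b + k ^ 4) = 0 := by linear_combination h1
  rcases mul_eq_zero.mp hb with hb | hb
  · exact ⟨by linear_combination -hb, by linear_combination hb⟩
  · obtain rfl : b = -k ^ 4 := by linear_combination hb
    exact absurd (pow_eq_zero_iff (n := 12) (by norm_num) |>.mp (by linear_combination -h4 / 10)) hk

theorem rigidity_of_dehomogenized {k a b c e f : ℚ}
    (h9 : ∀ t : ℚ, 2 * k ^ 9 + 3 * k * (a + b * t) ^ 2 - 6 * k ^ 5 * (a + b * t) =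
      c * (2 + 3 * t ^ 2 - 6 * t))
    (h12 : ∀ t : ℚ, (a + b * t) ^ 3 - 6 * k ^ 4 * (a + b * t) ^ 2 + k ^ 12 =
      e * (2 + 3 * t ^ 2 - 6 * t) + f * (t ^ 3 - 6 * t ^ 2 + 1)) :
    a = 0 ∧ b = k ^ 4 := by
  -- the coefficients of `t` are read off from the values at `t = 0, ±1` (and `2`)
  apply rigidity_of_equations
  · linear_combination (5 * h9 0 - h9 1 - h9 (-1)) / 3
  · linear_combination (-4 * h9 0 + 3 * h9 1 + h9 (-1)) / 12
  · linear_combination (21 * h12 0 - 24 * h12 1 - 8 * h12 (-1) + 11 * h12 2) / 18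
  · linear_combination (6 * h12 0 + 15 * h12 1 + h12 (-1) - 4 * h12 2) / 18

end E6D5

/-- Rigidity computation for `X = E₆/D₅·S¹`. -/
theorem E6_D5_rigidity (k a b : ℚ)
    (y1 y4 g9 g12 : MvPolynomial (Fin 2) ℚ)
    (hy1 : y1 = X 0) (hy4 : y4 = X 1)
    (hg9 : g9 = 2 * y1 ^ 9 + 3 * y1 * y4 ^ 2 - 6 * y1 ^ 5 * y4)
    (hg12 : g12 = y4 ^ 3 - 6 * y1 ^ 4 * y4 ^ 2 + y1 ^ 12)
    (I : Ideal (MvPolynomial (Fin 2) ℚ)) (hI : I = Ideal.span {g9, g12})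
    (φ : MvPolynomial (Fin 2) ℚ →ₐ[ℚ] MvPolynomial (Fin 2) ℚ)
    (hφ1 : φ y1 = C k * y1)
    (hφ4 : φ y4 = C a * y1 ^ 4 + C b * y4)
    (h9 : φ g9 ∈ I) (h12 : φ g12 ∈ I) :
    a = 0 ∧ b = k ^ 4 := by
  subst hy1 hy4 hg9 hg12 hI
  have hφ := E6D5.isWeightedHomogeneous_map hφ1 hφ4
  obtain ⟨c, hc⟩ := E6D5.exists_eq_C_mul_g9 (hφ E6D5.isWeightedHomogeneous_g9) h9
  obtain ⟨e, f, hef⟩ := E6D5.exists_eq_C_mul_X_pow_mul_g9_add_C_mul_g12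
    (hφ E6D5.isWeightedHomogeneous_g12) h12
  refine E6D5.rigidity_of_dehomogenized (c := c) (e := e) (f := f) (fun t => ?_) (fun t => ?_)
  · have := congrArg (eval ![1, t]) hc
    simp only [E6D5.g9, map_sub, map_add, map_mul, map_ofNat, map_pow, hφ1, hφ4, eval_C, eval_X,
      Matrix.cons_val_zero, Matrix.cons_val_one, mul_one, one_pow] at this
    linear_combination this
  · have := congrArg (eval ![1, t]) hef
    simp only [E6D5.g9, E6D5.g12, map_sub, map_add, map_mul, map_ofNat, map_pow, hφ1, hφ4, eval_C,
      eval_X, Matrix.cons_val_zero, Matrix.cons_val_one, mul_one, one_pow] at this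
    linear_combination this
end
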